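/- arXiv:2208.02088 — 3 statements merged into one kernel-verified Lean document; each statement's English description precedes it below -/
import Mathlib

section
/- For a ∈ (0,1) and z < 0, as z → -∞, the Lerch transcendent with s = 1 satisfies Φ(z, 1, a) ~ (π / sin(aπ)) · (-z)^{-a}; that is, lim_{z→-∞} (-z)^a · Φ(z,1,a) = π/sin(aπ), where Φ(z,1,a) = ∫₀^∞ e^{-a t}/(1 - z e^{-t}) dt. -/
/-!
Substituting `u = -z e^{-t}` turns `(-z)^a Φ(z,1,a)` into `∫₀^{-z} u^{a-1}/(1+u) du`, which tends
to `∫₀^∞ u^{a-1}/(1+u) du` as `z → -∞`. The substitution `u = x/(1-x)` identifies the latter with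
the Beta integral `B(a, 1-a) = Γ(a) Γ(1-a) = π / sin(πa)`.
-/

open MeasureTheory Real Set Filter Topology

section ChangeOfVariables

variable {E : Type*} [NormedAddCommGroup E] [NormedSpace ℝ E]

lemma image_mul_exp_neg_Ioi {l : ℝ} (hl : 0 < l) :
    (fun t ↦ l * exp (-t)) '' Ioi 0 = Ioo 0 l := by
  have h : (fun t ↦ l * exp (-t)) = (l * ·) ∘ exp ∘ Neg.neg := rfl
  rw [h, image_comp, image_comp, image_neg_Ioi, neg_zero, image_exp_Iio, exp_zero,
    image_mul_left_Ioo hl, mul_zero, mul_one]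

lemma integral_Ioi_mul_exp_neg_smul {l : ℝ} (hl : 0 < l) (g : ℝ → E) :
    ∫ t in Ioi 0, (l * exp (-t)) • g (l * exp (-t)) = ∫ u in Ioo 0 l, g u := by
  have hinj : InjOn (fun t ↦ l * exp (-t)) (Ioi 0) := fun s _ t _ hst ↦
    neg_injective (exp_injective (mul_left_cancel₀ hl.ne' hst))
  rw [← image_mul_exp_neg_Ioi hl, integral_image_eq_integral_abs_deriv_smul measurableSet_Ioi
    (fun t _ ↦ ((hasDerivAt_neg t).exp.const_mul l).hasDerivWithinAt) hinj]
  refine setIntegral_congr_fun measurableSet_Ioi fun t _ ↦ ?_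
  rw [mul_neg_one, mul_neg, abs_neg, abs_of_pos (by positivity)]

lemma image_div_one_sub_Ioo : (fun x ↦ x / (1 - x)) '' Ioo 0 1 = Ioi (0 : ℝ) := by
  refine Subset.antisymm ?_ fun u (hu : 0 < u) ↦ ⟨u / (1 + u), ?_, ?_⟩
  · rintro _ ⟨x, ⟨hx0, hx1⟩, rfl⟩
    exact div_pos hx0 (sub_pos.2 hx1)
  · exact ⟨by positivity, (div_lt_one (by positivity)).2 (by linarith)⟩
  · field_simp
    ring

lemma hasDerivAt_div_one_sub {x : ℝ} (hx : x ≠ 1) :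
    HasDerivAt (fun x ↦ x / (1 - x)) ((1 - x) ^ 2)⁻¹ x := by
  have hx' : 1 - x ≠ 0 := sub_ne_zero.2 hx.symm
  refine ((hasDerivAt_id' x).div ((hasDerivAt_id' x).const_sub 1) hx').congr_deriv ?_
  field_simp
  ring

lemma injOn_div_one_sub : InjOn (fun x : ℝ ↦ x / (1 - x)) (Ioo 0 1) := by
  intro x ⟨_, hx⟩ y ⟨_, hy⟩ hxy
  have := sub_pos.2 hx
  have := sub_pos.2 hy
  field_simp at hxy
  linarith

lemma integral_Ioi_eq_integral_Ioo_div_one_sub (g : ℝ → E) :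
    ∫ u in Ioi 0, g u = ∫ x in Ioo 0 1, ((1 - x) ^ 2)⁻¹ • g (x / (1 - x)) := by
  rw [← image_div_one_sub_Ioo, integral_image_eq_integral_abs_deriv_smul measurableSet_Ioo
    (fun x hx ↦ (hasDerivAt_div_one_sub hx.2.ne).hasDerivWithinAt) injOn_div_one_sub]
  simp_rw [abs_inv, abs_sq]

lemma integrableOn_Ioi_iff_integrableOn_Ioo_div_one_sub (g : ℝ → E) :
    IntegrableOn g (Ioi 0) ↔
      IntegrableOn (fun x ↦ ((1 - x) ^ 2)⁻¹ • g (x / (1 - x))) (Ioo 0 1) := by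
  rw [← image_div_one_sub_Ioo, integrableOn_image_iff_integrableOn_abs_deriv_smul
    measurableSet_Ioo (fun x hx ↦ (hasDerivAt_div_one_sub hx.2.ne).hasDerivWithinAt)
    injOn_div_one_sub]
  simp_rw [abs_inv, abs_sq]

lemma tendsto_setIntegral_Ioo_atTop {f : ℝ → E} {a : ℝ} (hf : IntegrableOn f (Ioi a)) :
    Tendsto (fun l ↦ ∫ u in Ioo a l, f u) atTop (𝓝 (∫ u in Ioi a, f u)) := by
  refine (intervalIntegral_tendsto_integral_Ioi a hf tendsto_id).congr' ?_
  filter_upwards [eventually_ge_atTop a] with l hl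
  rw [id, intervalIntegral.integral_of_le hl, integral_Ioc_eq_integral_Ioo]

end ChangeOfVariables

section Beta

variable {α β : ℝ}

lemma cpow_mul_one_sub_cpow_ofReal {x : ℝ} (hx : x ∈ Icc 0 1) :
    (x : ℂ) ^ ((α : ℂ) - 1) * (1 - (x : ℂ)) ^ ((β : ℂ) - 1) =
      ((x ^ (α - 1) * (1 - x) ^ (β - 1) : ℝ) : ℂ) := by
  rw [Complex.ofReal_mul, Complex.ofReal_cpow hx.1, Complex.ofReal_cpow (sub_nonneg.2 hx.2)]
  push_cast
  rfl

lemma intervalIntegrable_rpow_mul_one_sub_rpow (hα : 0 < α) (hβ : 0 < β) :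
    IntervalIntegrable (fun x ↦ x ^ (α - 1) * (1 - x) ^ (β - 1)) volume 0 1 := by
  have h := intervalIntegrable_iff.1 <|
    Complex.betaIntegral_convergent (u := α) (v := β) (by simpa) (by simpa)
  refine intervalIntegrable_iff.2 <|
    IntegrableOn.congr_fun h.re (fun x hx ↦ ?_) measurableSet_uIoc
  rw [uIoc_of_le zero_le_one] at hx
  simp [cpow_mul_one_sub_cpow_ofReal (Ioc_subset_Icc_self hx)]

lemma integral_rpow_mul_one_sub_rpow (hα : 0 < α) (hβ : 0 < β) :
    ∫ x in (0 : ℝ)..1, x ^ (α - 1) * (1 - x) ^ (β - 1) = ProbabilityTheory.beta α β := by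
  rw [ProbabilityTheory.beta_eq_betaIntegralReal α β hα hβ, Complex.betaIntegral,
    intervalIntegral.integral_congr
      (g := fun x : ℝ ↦ ((x ^ (α - 1) * (1 - x) ^ (β - 1) : ℝ) : ℂ))
      fun x hx ↦ cpow_mul_one_sub_cpow_ofReal (uIcc_of_le (zero_le_one' ℝ) ▸ hx),
    intervalIntegral.integral_ofReal, Complex.ofReal_re]

lemma beta_one_sub (a : ℝ) : ProbabilityTheory.beta a (1 - a) = π / sin (π * a) := by
  rw [ProbabilityTheory.beta, add_sub_cancel, Real.Gamma_one, div_one,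
    Real.Gamma_mul_Gamma_one_sub]

end Beta

lemma inv_sq_one_sub_smul_rpow_div_one_add {x : ℝ} (hx : x ∈ Ioo 0 1) (a : ℝ) :
    ((1 - x) ^ 2)⁻¹ • ((x / (1 - x)) ^ (a - 1) / (1 + x / (1 - x))) =
      x ^ (a - 1) * (1 - x) ^ (1 - a - 1) := by
  have hy : 0 < 1 - x := sub_pos.2 hx.2
  have hya : (1 - x) ^ a ≠ 0 := (rpow_pos_of_pos hy a).ne'
  rw [smul_eq_mul, div_rpow hx.1.le hy.le, rpow_sub_one hy.ne', sub_sub_cancel_left,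
    rpow_neg hy.le]
  field_simp
  ring

lemma integrableOn_rpow_sub_one_div_one_add {a : ℝ} (ha0 : 0 < a) (ha1 : a < 1) :
    IntegrableOn (fun u : ℝ ↦ u ^ (a - 1) / (1 + u)) (Ioi 0) := by
  rw [integrableOn_Ioi_iff_integrableOn_Ioo_div_one_sub,
    integrableOn_congr_fun (fun x hx ↦ inv_sq_one_sub_smul_rpow_div_one_add hx a)
      measurableSet_Ioo,
    ← intervalIntegrable_iff_integrableOn_Ioo_of_le zero_le_one]
  exact intervalIntegrable_rpow_mul_one_sub_rpow ha0 (sub_pos.2 ha1)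

lemma integral_Ioi_rpow_sub_one_div_one_add {a : ℝ} (ha0 : 0 < a) (ha1 : a < 1) :
    ∫ u in Ioi (0 : ℝ), u ^ (a - 1) / (1 + u) = π / sin (π * a) := by
  rw [integral_Ioi_eq_integral_Ioo_div_one_sub,
    setIntegral_congr_fun measurableSet_Ioo
      (fun x hx ↦ inv_sq_one_sub_smul_rpow_div_one_add hx a),
    ← integral_Ioc_eq_integral_Ioo, ← intervalIntegral.integral_of_le zero_le_one,
    integral_rpow_mul_one_sub_rpow ha0 (sub_pos.2 ha1), beta_one_sub]

lemma neg_rpow_mul_integral_exp_div_one_sub_mul_exp {z : ℝ} (hz : z < 0) (a : ℝ) :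
    (-z) ^ a * ∫ t in Ioi 0, exp (-a * t) / (1 - z * exp (-t)) =
      ∫ u in Ioo 0 (-z), u ^ (a - 1) / (1 + u) := by
  rw [← integral_Ioi_mul_exp_neg_smul (neg_pos.2 hz), ← integral_const_mul]
  refine setIntegral_congr_fun measurableSet_Ioi fun t _ ↦ ?_
  have hw : 0 < -z * exp (-t) := mul_pos (neg_pos.2 hz) (exp_pos _)
  rw [smul_eq_mul, ← mul_div_assoc (-z * exp (-t)), mul_comm (-z * exp (-t)),
    ← rpow_add_one hw.ne', sub_add_cancel, mul_rpow (neg_pos.2 hz).le (exp_pos _).le, ← exp_mul]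
  ring_nf

/-- For `a ∈ (0,1)`, with `Φ(z,1,a) = ∫₀^∞ e^{-at}/(1 - z e^{-t}) dt`,
we have `lim_{z→-∞} (-z)^a · Φ(z,1,a) = π / sin(aπ)`. -/
theorem lerch_asymptotic_s_one (a : ℝ) (ha0 : 0 < a) (ha1 : a < 1) :
    Tendsto (fun z : ℝ =>
        (-z) ^ a * ∫ t in Ioi (0:ℝ), Real.exp (-a * t) / (1 - z * Real.exp (-t)))
      atBot (𝓝 (π / Real.sin (a * π))) := by
  have hlim := (tendsto_setIntegral_Ioo_atTop
    (integrableOn_rpow_sub_one_div_one_add ha0 ha1)).comp tendsto_neg_atBot_atTop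
  rw [integral_Ioi_rpow_sub_one_div_one_add ha0 ha1, mul_comm π] at hlim
  refine hlim.congr' ?_
  filter_upwards [eventually_lt_atBot 0] with z hz
  exact (neg_rpow_mul_integral_exp_div_one_sub_mul_exp hz a).symm
end

section
/- Fix γ ∈ (0,1), λ > 0, φ ∈ (0,1], a positive integer r, and θ > 0. Define, for ν ∈ (0,1), h(ν, θ) = ν · θ (r-1)! λ^{-r} Φ(-θ/φ, r, 1-γ) where Φ is the Lerch transcendent. Then, with ℓ_ν = log(ν^{-1}), lim_{ν→0} h(ν, ν^{-1/γ} ℓ_ν^{-(r-1)/γ} θ) = (φ^{1-γ} θ^γ / (λ^r γ^{r-1})) · π/sin(γπ). -/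
/-!
Put `a = 1 - γ`, `ℓ = log ν⁻¹` and `x = θ ν^{-1/γ} ℓ^{-(r-1)/γ} / φ`. Substituting `t = u + log x`
in the integral defining `Φ(-x, r, a)` gives
`(r-1)! Φ(-x, r, a) = x^{-a} (log x)^{r-1} ∫_{u > -log x} (1 + u / log x)^{r-1} e^{-a u} σ(u) du`
with `σ` the sigmoid. By dominated convergence (with dominating function `e^{-ε|u|}`) the last
integral tends to `∫ e^{-a u} σ(u) du`, which the substitution `y = σ(u)` turns into the Beta
integral `B(1 - a, a) = π / sin (π a)`. Finally `log x ~ ℓ / γ`, and the scaling of `x` is chosen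
so that `ν (φ x)^γ = θ^γ ℓ^{-(r-1)}`.
-/

open MeasureTheory Real Set Filter Topology

/-- The Lerch transcendent `Φ(z,r,a)` for positive integer `r`, `a > 0`, `z < 0`, via its
integral representation `Φ(z,r,a) = (1/(r-1)!)∫₀^∞ t^{r-1} e^{-at}/(1 - z e^{-t}) dt`. -/
noncomputable def lerchPhi (z : ℝ) (r : ℕ) (a : ℝ) : ℝ :=
  ((Nat.factorial (r - 1) : ℝ))⁻¹ * ∫ t in Ioi (0:ℝ), t ^ (r - 1) * Real.exp (-a * t) / (1 - z * Real.exp (-t))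

theorem integral_Ioo_rpow_neg_mul_one_sub_rpow {a : ℝ} (ha0 : 0 < a) (ha1 : a < 1) :
    ∫ x in Ioo (0:ℝ) 1, x ^ (-a) * (1 - x) ^ (a - 1) = π / sin (π * a) := by
  have hbeta : Complex.betaIntegral (1 - a) a = ((π / sin (π * a) : ℝ) : ℂ) := by
    have h := Complex.Gamma_mul_Gamma_eq_betaIntegral (s := 1 - a) (t := a)
      (by simpa using ha1) (by simpa using ha0)
    rw [sub_add_cancel, Complex.Gamma_one, one_mul] at h
    rw [← h, mul_comm,
      show (1 : ℂ) - a = ((1 - a : ℝ) : ℂ) by push_cast; ring,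
      Complex.Gamma_ofReal, Complex.Gamma_ofReal, ← Complex.ofReal_mul,
      Real.Gamma_mul_Gamma_one_sub]
  have hreal : Complex.betaIntegral (1 - a) a
      = ((∫ x in (0:ℝ)..1, x ^ (-a) * (1 - x) ^ (a - 1) : ℝ) : ℂ) := by
    rw [Complex.betaIntegral, ← intervalIntegral.integral_ofReal]
    refine intervalIntegral.integral_congr fun x hx => ?_
    rw [uIcc_of_le zero_le_one] at hx
    rw [show (1 - (a:ℂ) - 1) = ((-a : ℝ) : ℂ) by push_cast; ring,
      show ((a:ℂ) - 1) = ((a - 1 : ℝ) : ℂ) by push_cast; ring,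
      show (1 - (x:ℂ)) = ((1 - x : ℝ) : ℂ) by push_cast; ring,
      ← Complex.ofReal_cpow hx.1, ← Complex.ofReal_cpow (by linarith [hx.2]),
      ← Complex.ofReal_mul]
  rw [← integral_Ioc_eq_integral_Ioo, ← intervalIntegral.integral_of_le zero_le_one]
  exact_mod_cast hreal.symm.trans hbeta

theorem integral_exp_neg_mul_mul_sigmoid {a : ℝ} (ha0 : 0 < a) (ha1 : a < 1) :
    ∫ u, exp (-a * u) * sigmoid u = π / sin (π * a) := by
  rw [← integral_Ioo_rpow_neg_mul_one_sub_rpow ha0 ha1, ← range_sigmoid, ← image_univ,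
    integral_image_eq_integral_abs_deriv_smul MeasurableSet.univ
      (fun u _ => (hasDerivAt_sigmoid u).hasDerivWithinAt) sigmoid_injective.injOn,
    setIntegral_univ]
  congr 1 with u
  have hs : 0 < sigmoid u := sigmoid_pos u
  have hcompl : 1 - sigmoid u = sigmoid u * exp (-u) := by
    rw [sigmoid_mul_rexp_neg, sigmoid_neg]
  rw [hcompl, abs_of_pos (by positivity), smul_eq_mul,
    mul_rpow hs.le (exp_pos _).le, ← exp_mul, rpow_sub hs, rpow_neg hs.le, rpow_one,
    show exp (-a * u) = exp (-u) * exp (-u * (a - 1)) by rw [← exp_add]; ring_nf]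
  field_simp

theorem integrable_exp_neg_mul_abs {ε : ℝ} (hε : 0 < ε) :
    Integrable fun u : ℝ => exp (-ε * |u|) := by
  refine Integrable.of_integral_ne_zero ?_
  rw [integral_comp_abs (f := fun u => exp (-ε * u)), integral_exp_mul_Ioi (by linarith) 0]
  field_simp
  positivity

theorem one_add_pow_le_exp_mul {x : ℝ} (hx : -1 ≤ x) (k : ℕ) : (1 + x) ^ k ≤ exp (k * x) := by
  rw [exp_nat_mul]
  exact pow_le_pow_left₀ (by linarith) (by linarith [add_one_le_exp x]) k

theorem sigmoid_le_exp (u : ℝ) : sigmoid u ≤ exp u := by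
  have h : sigmoid u * exp (-u) ≤ 1 := sigmoid_mul_rexp_neg u ▸ sigmoid_le_one (-u)
  rwa [exp_neg, mul_inv_le_iff₀ (exp_pos u), one_mul] at h

theorem exp_mul_abs_mul_exp_neg_mul_mul_sigmoid_le {a ε : ℝ} (ha : 2 * ε ≤ a)
    (ha' : 2 * ε ≤ 1 - a) (u : ℝ) :
    exp (ε * |u|) * (exp (-a * u) * sigmoid u) ≤ exp (-ε * |u|) := by
  rcases le_total 0 u with hu | hu
  · calc exp (ε * |u|) * (exp (-a * u) * sigmoid u) ≤ exp (ε * |u|) * (exp (-a * u) * 1) := by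
          gcongr; exact sigmoid_le_one u
      _ ≤ exp (-ε * |u|) := by
          rw [mul_one, ← exp_add, abs_of_nonneg hu]; gcongr; nlinarith
  · calc exp (ε * |u|) * (exp (-a * u) * sigmoid u) ≤ exp (ε * |u|) * (exp (-a * u) * exp u) := by
          gcongr; exact sigmoid_le_exp u
      _ ≤ exp (-ε * |u|) := by
          rw [← exp_add, ← exp_add, abs_of_nonpos hu]; gcongr; nlinarith

theorem one_add_div_pow_mul_exp_neg_mul_mul_sigmoid_le {a ε L u : ℝ} (ha : 2 * ε ≤ a)
    (ha' : 2 * ε ≤ 1 - a) {k : ℕ} (hL : 0 < L) (hkL : k ≤ ε * L) (hu : -L < u) :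
    (1 + u / L) ^ k * (exp (-a * u) * sigmoid u) ≤ exp (-ε * |u|) := by
  have hbase : -1 ≤ u / L := by rw [le_div_iff₀ hL]; linarith
  have hexp : k * (u / L) ≤ ε * |u| :=
    calc k * (u / L) ≤ k * (|u| / L) := by gcongr; exact le_abs_self u
      _ ≤ ε * L * (|u| / L) := by gcongr
      _ = ε * |u| := by field_simp
  calc (1 + u / L) ^ k * (exp (-a * u) * sigmoid u)
      ≤ exp (ε * |u|) * (exp (-a * u) * sigmoid u) :=
        mul_le_mul_of_nonneg_right ((one_add_pow_le_exp_mul hbase k).trans (exp_le_exp.mpr hexp))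
          (mul_pos (exp_pos _) (sigmoid_pos u)).le
    _ ≤ exp (-ε * |u|) := exp_mul_abs_mul_exp_neg_mul_mul_sigmoid_le ha ha' u

noncomputable def shiftedLerchIntegral (a : ℝ) (k : ℕ) (L : ℝ) : ℝ :=
  ∫ u in Ioi (-L), (1 + u / L) ^ k * (exp (-a * u) * sigmoid u)

theorem tendsto_shiftedLerchIntegral {a : ℝ} (ha0 : 0 < a) (ha1 : a < 1) (k : ℕ) :
    Tendsto (shiftedLerchIntegral a k) atTop (𝓝 (π / sin (π * a))) := by
  obtain ⟨ε, hε, hεa, hεa'⟩ : ∃ ε : ℝ, 0 < ε ∧ 2 * ε ≤ a ∧ 2 * ε ≤ 1 - a :=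
    ⟨min a (1 - a) / 2, by positivity, by linarith [min_le_left a (1 - a)],
      by linarith [min_le_right a (1 - a)]⟩
  rw [← integral_exp_neg_mul_mul_sigmoid ha0 ha1, show shiftedLerchIntegral a k = fun L =>
    ∫ u, (Ioi (-L)).indicator (fun u => (1 + u / L) ^ k * (exp (-a * u) * sigmoid u)) u from
    funext fun L => (integral_indicator measurableSet_Ioi).symm]
  refine tendsto_integral_filter_of_dominated_convergence (fun u => exp (-ε * |u|))
    (Eventually.of_forall fun L => ?_) ?_ (integrable_exp_neg_mul_abs hε) (ae_of_all _ fun u => ?_)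
  · exact (Continuous.aestronglyMeasurable (by fun_prop)).indicator measurableSet_Ioi
  · filter_upwards [eventually_gt_atTop 0,
      (tendsto_id.const_mul_atTop hε).eventually_ge_atTop (k : ℝ)] with L hL hkL
    refine ae_of_all _ fun u => ?_
    by_cases hu : u ∈ Ioi (-L)
    · have hσ : 0 < exp (-a * u) * sigmoid u := mul_pos (exp_pos _) (sigmoid_pos u)
      have hbase : 0 ≤ 1 + u / L := by
        rw [← neg_le_iff_add_nonneg', le_div_iff₀ hL]; linarith [mem_Ioi.mp hu]
      rw [indicator_of_mem hu, norm_of_nonneg (by positivity)]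
      exact one_add_div_pow_mul_exp_neg_mul_mul_sigmoid_le hεa hεa' hL hkL hu
    · rw [indicator_of_notMem hu, norm_zero]; positivity
  · have hlim : Tendsto (fun L => (1 + u / L) ^ k * (exp (-a * u) * sigmoid u)) atTop
        (𝓝 (exp (-a * u) * sigmoid u)) := by
      simpa only [id, add_zero, one_pow, one_mul] using
        (((tendsto_const_nhds.div_atTop (tendsto_id (α := ℝ))).const_add 1).pow k).mul_const
          (exp (-a * u) * sigmoid u)
    refine hlim.congr' ?_
    filter_upwards [eventually_gt_atTop (-u)] with L hL
    rw [indicator_of_mem (show u ∈ Ioi (-L) from neg_lt.mp hL)]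

theorem factorial_mul_lerchPhi_neg {x : ℝ} (hx : 1 < x) (k : ℕ) (a : ℝ) :
    (Nat.factorial k : ℝ) * lerchPhi (-x) (k + 1) a =
      x ^ (-a) * log x ^ k * shiftedLerchIntegral a k (log x) := by
  have hx0 : 0 < x := by linarith
  set L := log x with hL_def
  have hL : 0 < L := log_pos hx
  have hxL : x = exp L := (exp_log hx0).symm
  rw [lerchPhi, Nat.add_sub_cancel, mul_inv_cancel_left₀ (by positivity), shiftedLerchIntegral,
    ← integral_const_mul, ← (measurePreserving_add_right volume L).setIntegral_preimage_emb
      (measurableEmbedding_addRight L), preimage_add_const_Ioi, zero_sub]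
  refine setIntegral_congr_fun measurableSet_Ioi fun u _ => ?_
  have hden : 1 - -x * exp (-(u + L)) = 1 + exp (-u) := by
    rw [neg_mul, sub_neg_eq_add, hxL, ← exp_add]; ring_nf
  have hpow : (u + L) ^ k = L ^ k * (1 + u / L) ^ k := by
    rw [← mul_pow]; field_simp; ring
  have hexp : exp (-a * (u + L)) = x ^ (-a) * exp (-a * u) := by
    rw [rpow_def_of_pos hx0, ← hL_def, ← exp_add]; ring_nf
  rw [hden, hpow, hexp, sigmoid_def]
  field_simp

theorem tendsto_lerchPhi_neg_atTop {a : ℝ} (ha0 : 0 < a) (ha1 : a < 1) (k : ℕ) :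
    Tendsto (fun x => x ^ a / log x ^ k * ((Nat.factorial k : ℝ) * lerchPhi (-x) (k + 1) a)) atTop
      (𝓝 (π / sin (π * a))) := by
  refine ((tendsto_shiftedLerchIntegral ha0 ha1 k).comp tendsto_log_atTop).congr' ?_
  filter_upwards [eventually_gt_atTop 1] with x hx
  have hxa : 0 < x ^ a := rpow_pos_of_pos (by linarith) a
  have hlog : 0 < log x := log_pos hx
  rw [factorial_mul_lerchPhi_neg hx, Function.comp_apply, rpow_neg (by linarith)]
  field_simp

theorem tendsto_mul_add_mul_log_add_div_self (p β c : ℝ) :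
    Tendsto (fun t => (p * t + β * log t + c) / t) atTop (𝓝 p) := by
  have h := (((tendsto_const_nhds (x := β)).mul isLittleO_log_id_atTop.tendsto_div_nhds_zero).add
    ((tendsto_const_nhds (x := c)).mul tendsto_inv_atTop_zero)).const_add p
  simp only [mul_zero, add_zero] at h
  refine h.congr' ?_
  filter_upwards [eventually_ne_atTop 0] with t ht
  simp only [id]
  field_simp
  ring

theorem tendsto_log_inv_nhdsGT_zero : Tendsto (fun ν : ℝ => log ν⁻¹) (𝓝[>] 0) atTop :=
  (tendsto_neg_atBot_atTop.comp tendsto_log_nhdsGT_zero).congr fun ν => (log_inv ν).symm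

theorem tendsto_log_rpow_mul_log_inv_rpow_mul_div_log_inv (p β : ℝ) {c : ℝ} (hc : 0 < c) :
    Tendsto (fun ν => log (ν ^ (-p) * log ν⁻¹ ^ β * c) / log ν⁻¹) (𝓝[>] 0) (𝓝 p) := by
  refine ((tendsto_mul_add_mul_log_add_div_self p β (log c)).comp
    tendsto_log_inv_nhdsGT_zero).congr' ?_
  filter_upwards [self_mem_nhdsWithin, tendsto_log_inv_nhdsGT_zero.eventually_gt_atTop 0]
    with ν (hν : 0 < ν) hℓ
  rw [Function.comp_apply, log_mul (by positivity) hc.ne', log_mul (by positivity) (by positivity),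
    log_rpow hν, log_rpow hℓ, log_inv]
  ring

theorem tendsto_rpow_mul_log_inv_rpow_mul_atTop {p : ℝ} (hp : 0 < p) (β : ℝ) {c : ℝ}
    (hc : 0 < c) : Tendsto (fun ν => ν ^ (-p) * log ν⁻¹ ^ β * c) (𝓝[>] 0) atTop := by
  have hℓ := tendsto_log_inv_nhdsGT_zero
  have hlog : Tendsto (fun ν => log (ν ^ (-p) * log ν⁻¹ ^ β * c)) (𝓝[>] 0) atTop :=
    ((tendsto_log_rpow_mul_log_inv_rpow_mul_div_log_inv p β hc).pos_mul_atTop hp hℓ).congr' <| by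
      filter_upwards [hℓ.eventually_gt_atTop 0] with ν hν using div_mul_cancel₀ _ hν.ne'
  refine (tendsto_exp_atTop.comp hlog).congr' ?_
  filter_upwards [self_mem_nhdsWithin, hℓ.eventually_gt_atTop 0] with ν (hν : 0 < ν) hℓν
  exact exp_log (by positivity)

theorem mul_rpow_neg_one_div_mul_rpow_mul_rpow {γ ν ℓ θ : ℝ} (hγ : γ ≠ 0) (hν : 0 < ν)
    (hℓ : 0 < ℓ) (hθ : 0 < θ) (k : ℕ) :
    ν * (ν ^ (-1 / γ) * ℓ ^ (-(k : ℝ) / γ) * θ) ^ γ = θ ^ γ / ℓ ^ k := by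
  rw [mul_rpow (by positivity) hθ.le, mul_rpow (by positivity) (by positivity), ← rpow_mul hν.le,
    ← rpow_mul hℓ.le, div_mul_cancel₀ _ hγ, div_mul_cancel₀ _ hγ, rpow_neg hℓ.le, rpow_natCast,
    rpow_neg_one]
  field_simp

theorem h_limit_fitness_increase_general (γ lam φ θ : ℝ) (r : ℕ)
    (hγ0 : 0 < γ) (hγ1 : γ < 1) (hφ0 : 0 < φ)
    (hr : 0 < r) (hθ : 0 < θ) :
    Tendsto (fun ν : ℝ =>
        ν * (ν ^ (-1 / γ) * (Real.log ν⁻¹) ^ (-((r : ℝ) - 1) / γ) * θ) * (Nat.factorial (r - 1) : ℝ) *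
          lam ^ (-(r : ℤ)) *
          lerchPhi (-(ν ^ (-1 / γ) * (Real.log ν⁻¹) ^ (-((r : ℝ) - 1) / γ) * θ) / φ) r (1 - γ))
      (nhdsWithin 0 (Ioo 0 1))
      (𝓝 ((φ ^ (1 - γ) * θ ^ γ / (lam ^ r * γ ^ (r - 1))) * (π / Real.sin (γ * π)))) := by
  obtain ⟨k, rfl⟩ : ∃ k, r = k + 1 := ⟨r - 1, by omega⟩
  have hk : ((k + 1 : ℕ) : ℝ) - 1 = k := by push_cast; ring
  simp only [hk, Nat.add_sub_cancel]
  set a := 1 - γ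
  have hl : 𝓝[Ioo 0 1] (0 : ℝ) ≤ 𝓝[>] 0 := nhdsWithin_mono _ Ioo_subset_Ioi_self
  set x : ℝ → ℝ := fun ν => ν ^ (-(1 / γ)) * log ν⁻¹ ^ (-(k : ℝ) / γ) * (θ / φ)
  have hx : Tendsto x (𝓝[Ioo 0 1] 0) atTop :=
    (tendsto_rpow_mul_log_inv_rpow_mul_atTop (by positivity) _ (by positivity)).mono_left hl
  have hratio : Tendsto (fun ν => log (x ν) / log ν⁻¹) (𝓝[Ioo 0 1] 0) (𝓝 (1 / γ)) :=
    (tendsto_log_rpow_mul_log_inv_rpow_mul_div_log_inv _ _ (by positivity)).mono_left hl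
  have hlim := ((tendsto_lerchPhi_neg_atTop (a := a) (by linarith) (by linarith) k).comp hx).mul
    (hratio.pow k) |>.const_mul (θ ^ γ * φ ^ a * (lam ^ (k + 1))⁻¹)
  convert hlim.congr' ?_ using 2
  · rw [show π * a = π - γ * π by ring, sin_pi_sub, one_div_pow]
    field_simp
  filter_upwards [self_mem_nhdsWithin, hx.eventually_gt_atTop 1,
    (tendsto_log_inv_nhdsGT_zero.mono_left hl).eventually_gt_atTop 0] with ν hν hxν hℓν
  set z := ν ^ (-1 / γ) * log ν⁻¹ ^ (-(k : ℝ) / γ) * θ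
  have hz : 0 < z := by have := hν.1; positivity
  have hxz : z / φ = x ν := by simp only [x, z]; rw [neg_div]; ring
  have hνz : ν * z = θ ^ γ / log ν⁻¹ ^ k * (φ ^ a * x ν ^ a) := by
    rw [← hxz, ← mul_rpow hφ0.le (by positivity), mul_div_cancel₀ _ hφ0.ne',
      ← mul_rpow_neg_one_div_mul_rpow_mul_rpow hγ0.ne' hν.1 hℓν hθ k, mul_assoc, ← rpow_add hz,
      add_sub_cancel, rpow_one]
  have hlogx : 0 < log (x ν) := log_pos hxν
  rw [Function.comp_apply, neg_div, hxz, hνz, zpow_neg, zpow_natCast]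
  field_simp
  ring

/-- With `h(ν,θ) = ν θ (r-1)! λ^{-r} Φ(-θ/φ, r, 1-γ)` and `ℓ_ν = log(ν⁻¹)`,
`lim_{ν→0⁺} h(ν, ν^{-1/γ} ℓ_ν^{-(r-1)/γ} θ) = (φ^{1-γ} θ^γ/(λ^r γ^{r-1}))·π/sin(γπ)`. -/
theorem h_limit_fitness_increase (γ lam φ θ : ℝ) (r : ℕ)
    (hγ0 : 0 < γ) (hγ1 : γ < 1) (hlam : 0 < lam) (hφ0 : 0 < φ) (hφ1 : φ ≤ 1)
    (hr : 0 < r) (hθ : 0 < θ) :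
    Tendsto (fun ν : ℝ =>
        ν * (ν ^ (-1 / γ) * (Real.log ν⁻¹) ^ (-((r : ℝ) - 1) / γ) * θ) * (Nat.factorial (r - 1) : ℝ) *
          lam ^ (-(r : ℤ)) *
          lerchPhi (-(ν ^ (-1 / γ) * (Real.log ν⁻¹) ^ (-((r : ℝ) - 1) / γ) * θ) / φ) r (1 - γ))
      (nhdsWithin 0 (Ioo 0 1))
      (𝓝 ((φ ^ (1 - γ) * θ ^ γ / (lam ^ r * γ ^ (r - 1))) * (π / Real.sin (γ * π)))) :=
  h_limit_fitness_increase_general γ lam φ θ r hγ0 hγ1 hφ0 hr hθ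
end

section
/- Let ω_n satisfy the recursion ω₁ = α₁/λ₁ and ω_{n+1} = ω_n ν_n/(δ_n - λ_{n+1}) when δ_n > λ_{n+1}, ω_{n+1} = ω_n ν_n/r_n when δ_n = λ_{n+1}, and ω_{n+1} = (ν_n (log ν_n^{-1})^{r_n-1} κ_n ω_n)^{λ_{n+1}/δ_n} when δ_n < λ_{n+1}. Then ω_{n+1} admits the closed form ω_{n+1} = (α₁/λ₁)^{δ_{n+1}/δ₁} · 𝓕_n(ν)^{-1} · ∏_{i=1}^n κ_i^{δ_{n+1}/δ_i}, where 𝓕_n(ν) = ∏_{i=1}^n f_i(ν_i)^{δ_{n+1}/δ_i} with f_i as in the paper and κ_i the corresponding case-defined constants. -/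
open Finset Real

/-- Lemma 7: The scale parameters `ω_n` defined by the case recursion admit
the closed form `ω_{n+1} = (α₁/λ₁)^{δ_{n+1}/δ₁} 𝓕_n(ν)⁻¹ ∏_{i=1}^n κ_i^{δ_{n+1}/δ_i}`. -/
theorem omega_closed_form (lam α ν : ℕ → ℝ) (δ : ℕ → ℝ) (r : ℕ → ℕ)
    (γ φ κ : ℕ → ℝ) (f : ℕ → ℝ → ℝ) (F : ℕ → ℝ) (w : ℕ → ℝ)
    (hlam1 : 0 < lam 1) (hα : ∀ i, 0 < α i) (hν : ∀ i, 0 < ν i ∧ ν i < 1)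
    (hδ : ∀ n (hn : 1 ≤ n), δ n = ((Finset.Icc 1 n).image lam).max' (
      Finset.Nonempty.image (Finset.nonempty_Icc.mpr hn) lam))
    (hr : ∀ n, r n = ((Finset.Icc 1 n).filter (fun j => lam j = δ n)).card)
    (hγ : ∀ n, γ n = δ n / δ (n + 1))
    (hφ : ∀ n, φ n = lam n / α n)
    (hκ : ∀ n, 1 ≤ n → κ n =
      if δ n > lam (n + 1) then (δ n - lam (n + 1))⁻¹
      else if δ n = lam (n + 1) then (r n : ℝ)⁻¹
      else (φ (n + 1) ^ (1 - γ n) / (lam (n + 1) ^ r n * γ n ^ (r n - 1))) *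
        (π / Real.sin (γ n * π)))
    (hf : ∀ i x, f i x = if lam (i + 1) ≤ δ i then x⁻¹
      else x⁻¹ * (Real.log x⁻¹) ^ (-((r i : ℝ) - 1)))
    (hF : ∀ n, F n = ∏ i ∈ Finset.Icc 1 n, (f i (ν i)) ^ (δ (n + 1) / δ i))
    (hw1 : w 1 = α 1 / lam 1)
    (hwrec : ∀ n, 1 ≤ n → w (n + 1) =
      if δ n > lam (n + 1) then w n * ν n / (δ n - lam (n + 1))
      else if δ n = lam (n + 1) then w n * ν n / (r n : ℝ)
      else (ν n * (Real.log (ν n)⁻¹) ^ (r n - 1) * κ n * w n) ^ (lam (n + 1) / δ n)) :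
    ∀ n, 1 ≤ n → w (n + 1) =
      (α 1 / lam 1) ^ (δ (n + 1) / δ 1) * (F n)⁻¹ *
        ∏ i ∈ Finset.Icc 1 n, (κ i) ^ (δ (n + 1) / δ i) := by
  -- basic structural facts about δ
  have hδle : ∀ n, 1 ≤ n → ∀ j ∈ Finset.Icc 1 n, lam j ≤ δ n := by
    intro n hn j hj
    rw [hδ n hn]
    exact Finset.le_max' _ _ (Finset.mem_image_of_mem lam hj)
  have hδmem : ∀ n, 1 ≤ n → ∃ j ∈ Finset.Icc 1 n, lam j = δ n := by
    intro n hn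
    have h := Finset.max'_mem _ (Finset.Nonempty.image (Finset.nonempty_Icc.mpr hn) lam)
    rw [← hδ n hn] at h
    simpa [Finset.mem_image] using h
  have hδpos : ∀ n, 1 ≤ n → 0 < δ n := by
    intro n hn
    have := hδle n hn 1 (Finset.mem_Icc.mpr ⟨le_refl 1, hn⟩)
    linarith
  have hδsucc : ∀ n, 1 ≤ n → δ (n + 1) = max (δ n) (lam (n + 1)) := by
    intro n hn
    apply le_antisymm
    · rw [hδ (n + 1) (by omega)]
      apply Finset.max'_le
      intro y hy
      obtain ⟨j, hj, rfl⟩ := Finset.mem_image.mp hy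
      rw [Finset.mem_Icc] at hj
      rcases Nat.lt_or_ge j (n + 1) with h | h
      · exact le_max_of_le_left (hδle n hn j (Finset.mem_Icc.mpr ⟨hj.1, by omega⟩))
      · have hj2 : j = n + 1 := by omega
        subst hj2
        exact le_max_right _ _
    · apply max_le
      · obtain ⟨j, hj, hje⟩ := hδmem n hn
        rw [Finset.mem_Icc] at hj
        rw [← hje, hδ (n + 1) (by omega)]
        exact Finset.le_max' _ _ (Finset.mem_image_of_mem lam
          (Finset.mem_Icc.mpr ⟨hj.1, by omega⟩))
      · rw [hδ (n + 1) (by omega)]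
        exact Finset.le_max' _ _ (Finset.mem_image_of_mem lam
          (Finset.mem_Icc.mpr ⟨by omega, le_refl _⟩))
  have hrpos : ∀ n, 1 ≤ n → 1 ≤ r n := by
    intro n hn
    obtain ⟨j, hj, hje⟩ := hδmem n hn
    rw [hr n]
    exact Finset.card_pos.mpr ⟨j, Finset.mem_filter.mpr ⟨hj, hje⟩⟩
  have hκpos : ∀ n, 1 ≤ n → 0 < κ n := by
    intro n hn
    rw [hκ n hn]
    split_ifs with h1 h2
    · exact inv_pos.mpr (by linarith)
    · have := hrpos n hn
      exact inv_pos.mpr (by exact_mod_cast this)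
    · have hlt : δ n < lam (n + 1) := lt_of_le_of_ne (not_lt.mp h1) h2
      have hδn := hδpos n hn
      have hδn1 : δ (n + 1) = lam (n + 1) := by
        rw [hδsucc n hn]; exact max_eq_right (le_of_lt hlt)
      have hγ0 : 0 < γ n := by
        rw [hγ n, hδn1]; exact div_pos hδn (by linarith)
      have hγ1 : γ n < 1 := by
        rw [hγ n, hδn1]
        exact (div_lt_one (by linarith)).mpr hlt
      have hsin : 0 < Real.sin (γ n * π) := by
        apply Real.sin_pos_of_pos_of_lt_pi
        · exact mul_pos hγ0 Real.pi_pos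
        · nlinarith [Real.pi_pos]
      have hφp : 0 < φ (n + 1) := by
        rw [hφ]; exact div_pos (by linarith) (hα (n + 1))
      apply mul_pos
      · apply div_pos (Real.rpow_pos_of_pos hφp _)
        exact mul_pos (pow_pos (by linarith) _) (pow_pos hγ0 _)
      · exact div_pos Real.pi_pos hsin
  have hfpos : ∀ i, 0 < f i (ν i) := by
    intro i
    obtain ⟨h0, h1⟩ := hν i
    rw [hf]
    split_ifs
    · exact inv_pos.mpr h0
    · exact mul_pos (inv_pos.mpr h0)
        (Real.rpow_pos_of_pos (Real.log_pos ((one_lt_inv₀ h0).mpr h1)) _)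
  have hApos : (0 : ℝ) < α 1 / lam 1 := div_pos (hα 1) hlam1
  have main : ∀ n, w (n + 1) =
      (α 1 / lam 1) ^ (δ (n + 1) / δ 1) * (F n)⁻¹ *
        ∏ i ∈ Finset.Icc 1 n, (κ i) ^ (δ (n + 1) / δ i) := by
    intro n
    induction n with
    | zero =>
      have h0 : Finset.Icc 1 0 = (∅ : Finset ℕ) := by simp
      rw [hF 0, h0]
      simp [hw1, div_self (ne_of_gt (hδpos 1 le_rfl))]
    | succ n ih =>
      have hm : 1 ≤ n + 1 := by omega
      have hδm := hδpos (n + 1) hm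
      have hsp : ∀ g : ℕ → ℝ, ∏ i ∈ Finset.Icc 1 (n + 1), g i
          = (∏ i ∈ Finset.Icc 1 n, g i) * g (n + 1) :=
        fun g => Finset.prod_Icc_succ_top hm g
      rw [hwrec (n + 1) hm]
      rcases lt_trichotomy (lam (n + 1 + 1)) (δ (n + 1)) with hcase | hcase | hcase
      · -- δ (n+1) > lam (n+2)
        have hδeq : δ (n + 1 + 1) = δ (n + 1) := by
          rw [hδsucc (n + 1) hm]; exact max_eq_left (le_of_lt hcase)
        rw [if_pos hcase]
        have hκm : κ (n + 1) = (δ (n + 1) - lam (n + 1 + 1))⁻¹ := by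
          rw [hκ (n + 1) hm, if_pos hcase]
        have hFm : F (n + 1) = F n * (ν (n + 1))⁻¹ := by
          rw [hF (n + 1), hδeq, hsp, ← hF n, div_self (ne_of_gt hδm), Real.rpow_one,
            hf, if_pos (le_of_lt hcase)]
        rw [ih, hFm, hδeq, hsp, div_self (ne_of_gt hδm), Real.rpow_one, hκm,
          mul_inv, inv_inv]
        ring
      · -- δ (n+1) = lam (n+2)
        have hδeq : δ (n + 1 + 1) = δ (n + 1) := by
          rw [hδsucc (n + 1) hm]; exact max_eq_left (le_of_eq hcase)
        rw [if_neg (by rw [hcase]; exact lt_irrefl _), if_pos hcase.symm]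
        have hκm : κ (n + 1) = ((r (n + 1) : ℝ))⁻¹ := by
          rw [hκ (n + 1) hm, if_neg (by rw [hcase]; exact lt_irrefl _), if_pos hcase.symm]
        have hFm : F (n + 1) = F n * (ν (n + 1))⁻¹ := by
          rw [hF (n + 1), hδeq, hsp, ← hF n, div_self (ne_of_gt hδm), Real.rpow_one,
            hf, if_pos (le_of_eq hcase)]
        rw [ih, hFm, hδeq, hsp, div_self (ne_of_gt hδm), Real.rpow_one, hκm,
          mul_inv, inv_inv]
        ring
      · -- δ (n+1) < lam (n+2)
        have hδeq : δ (n + 1 + 1) = lam (n + 1 + 1) := by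
          rw [hδsucc (n + 1) hm]; exact max_eq_right (le_of_lt hcase)
        rw [if_neg (not_lt.mpr (le_of_lt hcase)), if_neg (ne_of_lt hcase)]
        obtain ⟨hν0, hν1⟩ := hν (n + 1)
        have hLpos : 0 < Real.log (ν (n + 1))⁻¹ :=
          Real.log_pos ((one_lt_inv₀ hν0).mpr hν1)
        have hrm : 1 ≤ r (n + 1) := hrpos (n + 1) hm
        have hfm : (f (n + 1) (ν (n + 1)))⁻¹
            = ν (n + 1) * Real.log (ν (n + 1))⁻¹ ^ (r (n + 1) - 1) := by
          rw [hf, if_neg (not_le.mpr hcase), mul_inv, inv_inv]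
          congr 1
          rw [Real.rpow_neg (le_of_lt hLpos), inv_inv,
            show ((r (n + 1) : ℝ) - 1) = ((r (n + 1) - 1 : ℕ) : ℝ) by
              rw [Nat.cast_sub hrm, Nat.cast_one],
            Real.rpow_natCast]
        have hexp : ∀ x : ℝ, 0 ≤ x → ∀ i, 1 ≤ i →
            (x ^ (δ (n + 1) / δ i)) ^ (δ (n + 1 + 1) / δ (n + 1))
              = x ^ (δ (n + 1 + 1) / δ i) := by
          intro x hx i hi
          rw [← Real.rpow_mul hx]
          congr 1
          have h1 : δ i ≠ 0 := ne_of_gt (hδpos i hi)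
          have h2 : δ (n + 1) ≠ 0 := ne_of_gt hδm
          field_simp
        have hfpos' : ∀ i ∈ Finset.Icc 1 n, (0 : ℝ) ≤ f i (ν i) ^ (δ (n + 1) / δ i) :=
          fun i _ => Real.rpow_nonneg (le_of_lt (hfpos i)) _
        have hκpos' : ∀ i ∈ Finset.Icc 1 n, (0 : ℝ) ≤ κ i ^ (δ (n + 1) / δ i) :=
          fun i hi => Real.rpow_nonneg (le_of_lt (hκpos i (Finset.mem_Icc.mp hi).1)) _
        have hFnpos : 0 < F n := by
          rw [hF n]
          exact Finset.prod_pos fun i _ => Real.rpow_pos_of_pos (hfpos i) _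
        have hCpos : 0 < ∏ i ∈ Finset.Icc 1 n, κ i ^ (δ (n + 1) / δ i) :=
          Finset.prod_pos fun i hi =>
            Real.rpow_pos_of_pos (hκpos i (Finset.mem_Icc.mp hi).1) _
        have step1 : ∏ i ∈ Finset.Icc 1 n, f i (ν i) ^ (δ (n + 1 + 1) / δ i)
            = (F n) ^ (δ (n + 1 + 1) / δ (n + 1)) := by
          rw [hF n, ← Real.finset_prod_rpow _ _ hfpos' _]
          exact Finset.prod_congr rfl fun i hi =>
            (hexp _ (le_of_lt (hfpos i)) i (Finset.mem_Icc.mp hi).1).symm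
        have stepκ : ∏ i ∈ Finset.Icc 1 n, κ i ^ (δ (n + 1 + 1) / δ i)
            = (∏ i ∈ Finset.Icc 1 n, κ i ^ (δ (n + 1) / δ i))
                ^ (δ (n + 1 + 1) / δ (n + 1)) := by
          rw [← Real.finset_prod_rpow _ _ hκpos' _]
          exact Finset.prod_congr rfl fun i hi =>
            (hexp _ (le_of_lt (hκpos i (Finset.mem_Icc.mp hi).1)) i
              (Finset.mem_Icc.mp hi).1).symm
        have eFinv : (F (n + 1))⁻¹
            = ((F n)⁻¹) ^ (δ (n + 1 + 1) / δ (n + 1))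
              * ((f (n + 1) (ν (n + 1)))⁻¹) ^ (δ (n + 1 + 1) / δ (n + 1)) := by
          rw [hF (n + 1), hsp, step1, mul_inv, ← Real.inv_rpow (le_of_lt hFnpos),
            ← Real.inv_rpow (le_of_lt (hfpos (n + 1)))]
        have eκ : (∏ i ∈ Finset.Icc 1 (n + 1), κ i ^ (δ (n + 1 + 1) / δ i))
            = (∏ i ∈ Finset.Icc 1 n, κ i ^ (δ (n + 1) / δ i))
                ^ (δ (n + 1 + 1) / δ (n + 1))
              * κ (n + 1) ^ (δ (n + 1 + 1) / δ (n + 1)) := by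
          rw [hsp, stepκ]
        have eA : (α 1 / lam 1) ^ (δ (n + 1 + 1) / δ 1)
            = ((α 1 / lam 1) ^ (δ (n + 1) / δ 1)) ^ (δ (n + 1 + 1) / δ (n + 1)) :=
          (hexp _ (le_of_lt hApos) 1 le_rfl).symm
        have hg : lam (n + 1 + 1) / δ (n + 1) = δ (n + 1 + 1) / δ (n + 1) := by
          rw [hδeq]
        have h1 : (0 : ℝ) ≤ (f (n + 1) (ν (n + 1)))⁻¹ :=
          le_of_lt (inv_pos.mpr (hfpos (n + 1)))
        have h2 : (0 : ℝ) ≤ κ (n + 1) := le_of_lt (hκpos (n + 1) hm)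
        have h3 : (0 : ℝ) ≤ (α 1 / lam 1) ^ (δ (n + 1) / δ 1) :=
          Real.rpow_nonneg (le_of_lt hApos) _
        have h4 : (0 : ℝ) ≤ (F n)⁻¹ := le_of_lt (inv_pos.mpr hFnpos)
        rw [ih, ← hfm, hg, eFinv, eκ, eA,
          Real.mul_rpow (mul_nonneg h1 h2) (by positivity),
          Real.mul_rpow h1 h2,
          Real.mul_rpow (mul_nonneg h3 h4) (le_of_lt hCpos),
          Real.mul_rpow h3 h4]
        ring
  intro n hn
  exact main n
end
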